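/- For every integer k and every integer n ≥ 0, the poly-Cauchy polynomial of the first kind has the explicit expansion C_n^(k)(x) = Σ_{m=0}^{n} S₁(n,m) Σ_{j=0}^{m} C(m,j) (-x)^j / (m-j+1)^k. -/

import Mathlib

open PowerSeries Finset

/-- Composition `F(G(t))` of formal power series (intended for `G` with zero
constant term, in which case `coeff n (G ^ m) = 0` for `m > n` and the finite
sum below computes the usual composition). -/
noncomputable def psComp (F G : PowerSeries ℝ) : PowerSeries ℝ :=
  PowerSeries.mk fun n => ∑ m ∈ Finset.range (n + 1),
    (PowerSeries.coeff m F) * (PowerSeries.coeff n (G ^ m))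

/-- The formal power series of `log (1 + t)`. -/
noncomputable def logSeries : PowerSeries ℝ :=
  PowerSeries.mk fun n => if n = 0 then 0 else (-1) ^ (n + 1) / n

/-- The polylogarithm factorial function `Lif_k(t) = ∑_{m ≥ 0} t^m / (m! (m+1)^k)`. -/
noncomputable def Lif (k : ℤ) : PowerSeries ℝ :=
  PowerSeries.mk fun m => 1 / ((m.factorial : ℝ) * ((m : ℝ) + 1) ^ k)

/-- The poly-Cauchy polynomial of the first kind `C_n^{(k)}(x)`, defined by
`Lif_k(log(1+t)) / (1+t)^x = ∑_{n ≥ 0} C_n^{(k)}(x) t^n / n!`, where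
`(1+t)^{-x} = exp (-x · log (1+t))`. -/
noncomputable def polyCauchy (k : ℤ) (n : ℕ) (x : ℝ) : ℝ :=
  (n.factorial : ℝ) * PowerSeries.coeff n
    (psComp (Lif k) logSeries *
      psComp (PowerSeries.rescale (-x) (PowerSeries.exp ℝ)) logSeries)

/-- The (signed) Stirling numbers of the first kind `S₁(l, m)`, defined by
`(log (1+t))^m = m! ∑_{l ≥ m} S₁(l,m) t^l / l!`. -/
noncomputable def S1 (l m : ℕ) : ℝ :=
  (l.factorial : ℝ) / (m.factorial : ℝ) * PowerSeries.coeff l (logSeries ^ m)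

/-- The ordinary Bernoulli numbers, via `t/(e^t - 1) = ∑ B_n t^n/n!`;
here `(mk fun m => 1/(m+1)!)` is the series `(e^t - 1)/t`. -/
noncomputable def Bern (n : ℕ) : ℝ :=
  (n.factorial : ℝ) * PowerSeries.coeff n
    (PowerSeries.mk fun m => (1 : ℝ) / (m + 1).factorial)⁻¹

/-- The Bernoulli polynomial of order `r`, via `(t/(e^t-1))^r e^{xt} = ∑ B_n^{(r)}(x) t^n/n!`. -/
noncomputable def bernPoly (r : ℕ) (n : ℕ) (x : ℝ) : ℝ :=
  (n.factorial : ℝ) * PowerSeries.coeff n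
    (((PowerSeries.mk fun m => (1 : ℝ) / (m + 1).factorial)⁻¹) ^ r *
      PowerSeries.rescale x (PowerSeries.exp ℝ))

/-- The series `log(1+t)/t`, so that `t / log(1+t) = Dlog⁻¹`. -/
noncomputable def Dlog : PowerSeries ℝ :=
  PowerSeries.mk fun n => (-1) ^ n / ((n : ℝ) + 1)

/-- The Cauchy numbers of the first kind, via `t/log(1+t) = ∑ C_n t^n/n!`. -/
noncomputable def cauchyNum (n : ℕ) : ℝ :=
  (n.factorial : ℝ) * PowerSeries.coeff n Dlog⁻¹

/-- The numbers `T_n^{(r,k)}`, via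
`(t/log(1+t))^r · Lif_k(log(1+t)) = ∑ T_n^{(r,k)} t^n/n!`. -/
noncomputable def T (r : ℕ) (k : ℤ) (n : ℕ) : ℝ :=
  (n.factorial : ℝ) * PowerSeries.coeff n (Dlog⁻¹ ^ r * psComp (Lif k) logSeries)

/-- The rising factorial `x^{(m)} = x (x+1) ⋯ (x+m-1)`. -/
noncomputable def risingFactorial (x : ℝ) (m : ℕ) : ℝ :=
  ∏ i ∈ Finset.range m, (x + i)

/-- Carlitz's polynomials `β_n^{(r)}(x)`, via `(t/log(1+t))^r (1+t)^x = ∑ β_n^{(r)}(x) t^n/n!`,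
where `(1+t)^x = exp (x log (1+t))`. -/
noncomputable def carlitz (r : ℕ) (n : ℕ) (x : ℝ) : ℝ :=
  (n.factorial : ℝ) * PowerSeries.coeff n
    (Dlog⁻¹ ^ r * psComp (PowerSeries.rescale x (PowerSeries.exp ℝ)) logSeries)


/-!
Since `log (1 + t)` has no constant term, composing with it is substitution, a ring
homomorphism; so the generating function of `C_n^{(k)}(x)` is `f(log (1 + t))` with
`f(u) = Lif_k(u) e^{-xu}`. The `m`-th coefficient of `f` is, by the Cauchy product,
`(1/m!) ∑_j C(m,j) (-x)^j / (m-j+1)^k`, and the `n`-th coefficient of `(log (1 + t))^m`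
is `m! S₁(n,m) / n!`.
-/

lemma PowerSeries.coeff_pow_eq_zero_of_lt {R : Type*} [CommSemiring R] {G : R⟦X⟧}
    (hG : constantCoeff G = 0) {p i : ℕ} (h : p < i) : coeff p (G ^ i) = 0 :=
  X_pow_dvd_iff.mp (pow_dvd_pow_of_dvd (X_dvd_iff.mpr hG) i) p h

lemma psComp_eq_subst {G : ℝ⟦X⟧} (hG : constantCoeff G = 0) (F : ℝ⟦X⟧) :
    psComp F G = F.subst G := by
  ext n
  rw [coeff_subst' (HasSubst.of_constantCoeff_zero' hG),
    finsum_eq_sum_of_support_subset (s := range (n + 1))]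
  · simp [psComp, smul_eq_mul]
  · intro d hd
    simp only [Function.mem_support, coe_range, Set.mem_Iio] at hd ⊢
    by_contra! hnd
    exact hd (by rw [coeff_pow_eq_zero_of_lt hG (by omega), smul_zero])

lemma psComp_mul {G : ℝ⟦X⟧} (hG : constantCoeff G = 0) (F H : ℝ⟦X⟧) :
    psComp F G * psComp H G = psComp (F * H) G := by
  simp only [psComp_eq_subst hG, subst_mul (HasSubst.of_constantCoeff_zero' hG)]

lemma constantCoeff_logSeries : constantCoeff logSeries = 0 := by
  simp [logSeries, ← coeff_zero_eq_constantCoeff_apply]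

lemma factorial_mul_coeff_Lif_mul_rescale_exp (k : ℤ) (a : ℝ) (m : ℕ) :
    (m.factorial : ℝ) * coeff m (Lif k * rescale a (exp ℝ)) =
      ∑ j ∈ range (m + 1), (m.choose j : ℝ) * a ^ j / ((m : ℝ) - j + 1) ^ k := by
  rw [coeff_mul, Nat.sum_antidiagonal_eq_sum_range_succ_mk, mul_sum,
    ← sum_range_reflect _ (m + 1)]
  refine sum_congr rfl fun i hmem => ?_
  have hi : i ≤ m := Nat.lt_succ_iff.mp (mem_range.mp hmem)
  simp only [Nat.add_sub_cancel, Nat.sub_sub_self hi, Lif, coeff_mk, coeff_rescale, coeff_exp,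
    map_div₀, map_one, map_natCast]
  rw [Nat.cast_choose ℝ hi, ← Nat.cast_sub hi]
  have : ((m - i : ℕ) + 1 : ℝ) ^ k ≠ 0 := zpow_ne_zero k (by positivity)
  field_simp

/-- explicit expansion of the poly-Cauchy polynomials. -/
theorem polyCauchy_explicit_expansion (k : ℤ) (n : ℕ) (x : ℝ) :
    polyCauchy k n x =
      ∑ m ∈ Finset.range (n + 1), S1 n m *
        ∑ j ∈ Finset.range (m + 1),
          (m.choose j : ℝ) * (-x) ^ j / ((m : ℝ) - j + 1) ^ k := by
  rw [polyCauchy, psComp_mul constantCoeff_logSeries, psComp, coeff_mk, mul_sum]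
  refine sum_congr rfl fun m _ => ?_
  rw [← factorial_mul_coeff_Lif_mul_rescale_exp, S1]
  field_simp
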